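/- arXiv:2101.10533 — 4 statements merged into one kernel-verified Lean document; each statement's English description precedes it below -/
import Mathlib

section
/- Let ν(dz) = (a/z) e^{−βz} dz on (0,∞) be the Lévy measure of a gamma law with shape a > 0 and rate β > 0. Then for every x > 0, the truncated Lévy measure ν_n of Bondesson's method, defined by ν_n(B) = ∫₀^n P(β^{−1} e^{−r/a} V ∈ B) dr with V a standard exponential random variable, satisfies ∫_x^∞ ν_n(dz) = a (E₁(βx) − E₁(βx e^{n/a})), where E₁(x) = ∫_x^∞ u^{−1} e^{−u} du is the exponential integral. -/
open MeasureTheory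

noncomputable def stdExpMeasure : Measure ℝ :=
  volume.withDensity fun x => ENNReal.ofReal (if 0 ≤ x then Real.exp (-x) else 0)

/-- The exponential integral `E₁(x) = ∫_x^∞ u⁻¹ e^{-u} du`. -/
noncomputable def expInt (x : ℝ) : ℝ := ∫ u in Set.Ioi x, Real.exp (-u) / u

lemma stdExp_tail {s : ℝ} (hs : 0 ≤ s) :
    stdExpMeasure (Set.Ioi s) = ENNReal.ofReal (Real.exp (-s)) := by
  rw [stdExpMeasure, withDensity_apply _ measurableSet_Ioi]
  have h1 : ∫⁻ u in Set.Ioi s, ENNReal.ofReal (if 0 ≤ u then Real.exp (-u) else 0)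
      = ∫⁻ u in Set.Ioi s, ENNReal.ofReal (Real.exp (-u)) := by
    refine setLIntegral_congr_fun measurableSet_Ioi (fun u hu => ?_)
    rw [if_pos (hs.trans (le_of_lt hu))]
  rw [h1, ← ofReal_integral_eq_lintegral_ofReal]
  · rw [integral_exp_neg_Ioi]
  · simpa [IntegrableOn] using exp_neg_integrableOn_Ioi s one_pos
  · exact ae_of_all _ fun u => (Real.exp_pos _).le

lemma integrableOn_expInt {c : ℝ} (hc : 0 < c) :
    IntegrableOn (fun u => Real.exp (-u) / u) (Set.Ioi c) := by
  have hexp : IntegrableOn (fun u => Real.exp (-u) * c⁻¹) (Set.Ioi c) := by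
    have := exp_neg_integrableOn_Ioi c (one_pos)
    simpa [IntegrableOn] using this.mul_const c⁻¹
  refine hexp.mono' ?_ ?_
  · exact ((Real.measurable_exp.comp measurable_neg).div measurable_id).aestronglyMeasurable.restrict
  · refine ae_restrict_of_forall_mem measurableSet_Ioi fun u hu => ?_
    have hu0 : 0 < u := hc.trans hu
    rw [Real.norm_eq_abs, abs_of_nonneg (by positivity)]
    rw [div_eq_mul_inv]
    gcongr
    exact le_of_lt hu

lemma expInt_sub {c d : ℝ} (hc : 0 < c) (hcd : c ≤ d) :
    expInt c - expInt d = ∫ u in c..d, Real.exp (-u) / u := by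
  have hd : 0 < d := lt_of_lt_of_le hc hcd
  have hunion : Set.Ioc c d ∪ Set.Ioi d = Set.Ioi c := Set.Ioc_union_Ioi_eq_Ioi hcd
  have hdisj : Disjoint (Set.Ioc c d) (Set.Ioi d) := Set.Ioc_disjoint_Ioi le_rfl
  have h1 : IntegrableOn (fun u => Real.exp (-u) / u) (Set.Ioc c d) :=
    (integrableOn_expInt hc).mono_set (hunion ▸ Set.subset_union_left)
  have h2 : IntegrableOn (fun u => Real.exp (-u) / u) (Set.Ioi d) := integrableOn_expInt hd
  have := setIntegral_union hdisj measurableSet_Ioi h1 h2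
  rw [hunion] at this
  rw [intervalIntegral.integral_of_le hcd, expInt, expInt, this]
  ring

lemma key_integral {a β n x : ℝ} (ha : 0 < a) (hβ : 0 < β) (hn : 0 < n) (hx : 0 < x) :
    ∫ r in (0:ℝ)..n, Real.exp (-(β * x * Real.exp (r / a)))
      = a * (expInt (β * x) - expInt (β * x * Real.exp (n / a))) := by
  set f : ℝ → ℝ := fun r => β * x * Real.exp (r / a) with hf
  set f' : ℝ → ℝ := fun r => β * x * (Real.exp (r / a) * a⁻¹) with hf'
  have hderiv : ∀ r ∈ Set.uIcc (0:ℝ) n, HasDerivAt f (f' r) r := by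
    intro r _
    have h1 : HasDerivAt (fun r : ℝ => r / a) a⁻¹ r := by
      simpa using (hasDerivAt_id r).div_const a
    exact ((h1.exp).const_mul (β * x))
  have hcont' : ContinuousOn f' (Set.uIcc (0:ℝ) n) := by
    fun_prop
  have hg : ContinuousOn (fun u => Real.exp (-u) / u) (f '' Set.uIcc (0:ℝ) n) := by
    apply ContinuousOn.div
    · fun_prop
    · fun_prop
    · rintro u ⟨r, _, rfl⟩
      positivity
  have hsub := intervalIntegral.integral_comp_smul_deriv' hderiv hcont' hg
  have hcongr : ∀ r : ℝ, f' r • ((fun u => Real.exp (-u) / u) ∘ f) r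
      = Real.exp (-(f r)) * a⁻¹ := by
    intro r
    have hne : β * x * Real.exp (r / a) ≠ 0 := by positivity
    simp only [Function.comp, smul_eq_mul, hf, hf']
    field_simp
  rw [intervalIntegral.integral_congr (fun r _ => hcongr r)] at hsub
  rw [intervalIntegral.integral_mul_const] at hsub
  have hf0 : f 0 = β * x := by simp [hf]
  have hfn : f n = β * x * Real.exp (n / a) := rfl
  rw [hf0, hfn] at hsub
  rw [expInt_sub (by positivity) ?hle]
  case hle =>
    have : (1:ℝ) ≤ Real.exp (n / a) := Real.one_le_exp (by positivity)
    exact le_mul_of_one_le_right (by positivity) this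
  rw [← hsub]
  field_simp
  rfl

/-- Tail of the truncated Lévy measure in Bondesson's method for the gamma law: if
`ν_n(B) = ∫₀^n P(β⁻¹ e^{-r/a} V ∈ B) dr` with `V` standard exponential, then for all `x > 0`,
`ν_n((x,∞)) = a (E₁(βx) − E₁(βx e^{n/a}))`. -/
theorem bondesson_gamma_truncated_tail
    {Ω : Type*} [MeasurableSpace Ω] (P : Measure Ω) [IsProbabilityMeasure P]
    (a β n : ℝ) (ha : 0 < a) (hβ : 0 < β) (hn : 0 < n)
    (V : Ω → ℝ) (hVmeas : Measurable V) (hVlaw : Measure.map V P = stdExpMeasure)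
    (νn : Set ℝ → ENNReal)
    (hνn : ∀ B : Set ℝ, MeasurableSet B →
      νn B = ∫⁻ r in Set.Ioc (0 : ℝ) n, P {ω | β⁻¹ * Real.exp (-r / a) * V ω ∈ B}) :
    ∀ x : ℝ, 0 < x →
      νn (Set.Ioi x) =
        ENNReal.ofReal (a * (expInt (β * x) - expInt (β * x * Real.exp (n / a)))) := by
  intro x hx
  rw [hνn _ measurableSet_Ioi]
  have hP : ∀ r : ℝ, P {ω | β⁻¹ * Real.exp (-r / a) * V ω ∈ Set.Ioi x}
      = ENNReal.ofReal (Real.exp (-(β * x * Real.exp (r / a)))) := by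
    intro r
    have hset : {ω | β⁻¹ * Real.exp (-r / a) * V ω ∈ Set.Ioi x}
        = V ⁻¹' Set.Ioi (β * x * Real.exp (r / a)) := by
      ext ω
      simp only [Set.mem_setOf_eq, Set.mem_Ioi, Set.mem_preimage]
      rw [mul_comm (β⁻¹ * Real.exp (-r / a)) (V ω), ← div_lt_iff₀ (by positivity)]
      have : x / (β⁻¹ * Real.exp (-r / a)) = β * x * Real.exp (r / a) := by
        rw [neg_div, Real.exp_neg]
        field_simp
      rw [this]
    rw [hset, ← Measure.map_apply hVmeas measurableSet_Ioi, hVlaw,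
      stdExp_tail (by positivity)]
  rw [setLIntegral_congr_fun measurableSet_Ioc (fun r _ => hP r)]
  rw [← ofReal_integral_eq_lintegral_ofReal]
  · rw [← intervalIntegral.integral_of_le hn.le, key_integral ha hβ hn hx]
  · exact (by fun_prop : Continuous fun r : ℝ => Real.exp (-(β * x * Real.exp (r / a)))).integrableOn_Ioc
  · exact ae_of_all _ fun r => (Real.exp_pos _).le
end

section
/- Let ν(dz) = (a/z) e^{−βz} dz be the gamma Lévy measure with a, β > 0 and let ν_n be the Lévy measure of the Poisson truncation at level n of Bondesson's representation, ν_n(B) = ∫₀^n P(β^{−1} e^{−r/a} V ∈ B) dr with V standard exponential. Then the variance of the discarded jumps satisfies ∫₀^∞ z² ν(dz) − ∫₀^∞ z² ν_n(dz) = (a/β²) e^{−2n/a}. -/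
open MeasureTheory
open scoped ENNReal

/-- The gamma Lévy measure `ν(dz) = (a/z) e^{-βz} dz` on `(0,∞)`. -/
noncomputable def gammaLevyMeasure (a β : ℝ) : Measure ℝ :=
  (volume.restrict (Set.Ioi (0 : ℝ))).withDensity
    fun z => ENNReal.ofReal (a / z * Real.exp (-β * z))

open Set Real in
lemma lintegral_Ioi_eq_of_zero_on_nonpos (f : ℝ → ℝ≥0∞) (hf0 : ∀ x ≤ (0 : ℝ), f x = 0) :
    ∫⁻ x in Set.Ioi (0 : ℝ), f x = ∫⁻ x, f x := by
  have : ∫⁻ x in Set.Iic (0 : ℝ), f x = 0 := by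
    rw [setLIntegral_congr_fun measurableSet_Iic (fun x hx => hf0 x hx)]
    simp
  conv_rhs => rw [← lintegral_add_compl f (measurableSet_Ioi (a := (0:ℝ)))]
  rw [compl_Ioi, this, add_zero]

open Set Real ProbabilityTheory in
lemma lintegral_gamma_kernel (p r : ℝ) (hp : 1 < p) (hr : 0 < r) :
    ∫⁻ x in Set.Ioi (0 : ℝ), ENNReal.ofReal (x ^ (p - 1) * Real.exp (-(r * x))) =
      ENNReal.ofReal (Real.Gamma p / r ^ p) := by
  have hΓ : 0 < Real.Gamma p := Real.Gamma_pos_of_pos (by linarith)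
  have hrp : 0 < r ^ p := Real.rpow_pos_of_pos hr p
  have key : ∀ x ∈ Set.Ioi (0 : ℝ),
      ENNReal.ofReal (x ^ (p - 1) * Real.exp (-(r * x))) =
        ENNReal.ofReal (Real.Gamma p / r ^ p) * gammaPDF p r x := by
    intro x hx
    rw [gammaPDF_of_nonneg (le_of_lt hx), ← ENNReal.ofReal_mul (by positivity)]
    congr 1
    field_simp
  rw [setLIntegral_congr_fun measurableSet_Ioi key, lintegral_const_mul']
  · have h1 : ∫⁻ x in Set.Ioi (0 : ℝ), gammaPDF p r x = 1 := by
      rw [lintegral_Ioi_eq_of_zero_on_nonpos]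
      · exact lintegral_gammaPDF_eq_one (by linarith) hr
      · intro x hx
        rcases lt_or_eq_of_le hx with hx' | hx'
        · exact gammaPDF_of_neg hx'
        · subst hx'
          rw [gammaPDF_of_nonneg le_rfl, Real.zero_rpow (by linarith : p - 1 ≠ 0)]
          simp
    rw [h1, mul_one]
  · exact ENNReal.ofReal_ne_top

/-- Variance of the jumps discarded by the Poisson truncation at level `n` of Bondesson's
representation of the gamma law: `∫ z² ν(dz) − ∫ z² ν_n(dz) = (a/β²) e^{-2n/a}`, where
`ν_n(B) = ∫₀^n P(β⁻¹ e^{-r/a} V ∈ B)dr` with `V` standard exponential. -/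
theorem bondesson_gamma_discarded_variance
    {Ω : Type*} [MeasurableSpace Ω] (P : Measure Ω) [IsProbabilityMeasure P]
    (a β n : ℝ) (ha : 0 < a) (hβ : 0 < β) (hn : 0 < n)
    (V : Ω → ℝ) (hVmeas : Measurable V) (hVlaw : Measure.map V P = stdExpMeasure)
    (νn : Measure ℝ)
    (hνn : ∀ B : Set ℝ, MeasurableSet B →
      νn B = ∫⁻ r in Set.Ioc (0 : ℝ) n, P {ω | β⁻¹ * Real.exp (-r / a) * V ω ∈ B}) :
    (∫⁻ z, ENNReal.ofReal (z ^ 2) ∂(gammaLevyMeasure a β)).toReal -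
        (∫⁻ z, ENNReal.ofReal (z ^ 2) ∂νn).toReal =
      a / β ^ 2 * Real.exp (-2 * n / a) := by
  have hg2 : Measurable fun z : ℝ => ENNReal.ofReal (z ^ 2) :=
    (measurable_id.pow_const 2).ennreal_ofReal
  have hGamma3 : Real.Gamma 3 = 2 := by
    rw [show (3 : ℝ) = (2 : ℕ) + 1 by norm_num, Real.Gamma_nat_eq_factorial]; norm_num
  -- Part 1: the gamma Lévy measure integral
  have hI1 : ∫⁻ z, ENNReal.ofReal (z ^ 2) ∂(gammaLevyMeasure a β) =
      ENNReal.ofReal (a / β ^ 2) := by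
    rw [gammaLevyMeasure, lintegral_withDensity_eq_lintegral_mul _ (by fun_prop) hg2]
    have h1 : ∀ z ∈ Set.Ioi (0 : ℝ),
        ((fun z : ℝ => ENNReal.ofReal (a / z * Real.exp (-β * z))) *
          fun z : ℝ => ENNReal.ofReal (z ^ 2)) z =
        ENNReal.ofReal a * ENNReal.ofReal (z ^ ((2 : ℝ) - 1) * Real.exp (-(β * z))) := by
      intro z hz
      have hz0 : (0 : ℝ) < z := hz
      simp only [Pi.mul_apply]
      rw [← ENNReal.ofReal_mul (by positivity), ← ENNReal.ofReal_mul ha.le]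
      congr 1
      rw [show (2 : ℝ) - 1 = 1 by norm_num, Real.rpow_one]
      field_simp
    rw [setLIntegral_congr_fun measurableSet_Ioi h1,
      lintegral_const_mul' _ _ ENNReal.ofReal_ne_top,
      lintegral_gamma_kernel 2 β one_lt_two hβ,
      ← ENNReal.ofReal_mul ha.le]
    congr 1
    rw [Real.Gamma_two, show (2 : ℝ) = ((2 : ℕ) : ℝ) by norm_num, Real.rpow_natCast]
    field_simp
  -- second moment of the standard exponential
  have hM : ∫⁻ x, ENNReal.ofReal (x ^ 2) ∂stdExpMeasure = 2 := by
    have hdens : Measurable fun x : ℝ => ENNReal.ofReal (if 0 ≤ x then Real.exp (-x) else 0) :=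
      Measurable.ennreal_ofReal (Measurable.ite (measurableSet_le measurable_const measurable_id)
        (by fun_prop) measurable_const)
    rw [stdExpMeasure, lintegral_withDensity_eq_lintegral_mul _ hdens hg2,
      ← lintegral_Ioi_eq_of_zero_on_nonpos _ ?_]
    · have h1 : ∀ x ∈ Set.Ioi (0 : ℝ),
          ((fun x : ℝ => ENNReal.ofReal (if 0 ≤ x then Real.exp (-x) else 0)) *
            fun x : ℝ => ENNReal.ofReal (x ^ 2)) x =
          ENNReal.ofReal (x ^ ((3 : ℝ) - 1) * Real.exp (-(1 * x))) := by
        intro x hx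
        have hx0 : (0 : ℝ) < x := hx
        simp only [Pi.mul_apply, if_pos hx0.le]
        rw [← ENNReal.ofReal_mul (Real.exp_pos _).le]
        congr 1
        rw [show (3 : ℝ) - 1 = ((2 : ℕ) : ℝ) by norm_num, Real.rpow_natCast, one_mul]
        ring
      rw [setLIntegral_congr_fun measurableSet_Ioi h1,
        lintegral_gamma_kernel 3 1 (by norm_num) one_pos, hGamma3, Real.one_rpow]
      norm_num
    · intro x hx
      rcases lt_or_eq_of_le hx with h | h
      · simp [Pi.mul_apply, if_neg (not_le.mpr h)]
      · subst h; simp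
  have hV2 : ∫⁻ ω, ENNReal.ofReal (V ω ^ 2) ∂P = 2 := by
    have := lintegral_map hg2 hVmeas (μ := P)
    rw [hVlaw, hM] at this
    exact this.symm
  -- identify νn as a pushforward
  set F : ℝ × Ω → ℝ := fun p => β⁻¹ * Real.exp (-p.1 / a) * V p.2 with hFdef
  have hF : Measurable F :=
    (measurable_const.mul ((measurable_fst.neg.div_const a).exp)).mul
      (hVmeas.comp measurable_snd)
  have hmap : νn = Measure.map F ((volume.restrict (Set.Ioc 0 n)).prod P) := by
    ext B hB
    rw [hνn B hB, Measure.map_apply hF hB, Measure.prod_apply (hF hB)]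
    rfl
  -- compute the νn integral
  have hsq : ∀ r v : ℝ, (β⁻¹ * Real.exp (-r / a) * v) ^ 2 =
      β⁻¹ ^ 2 * Real.exp (-2 * r / a) * v ^ 2 := by
    intro r v
    have h : Real.exp (-r / a) ^ 2 = Real.exp (-2 * r / a) := by
      rw [← Real.exp_nat_mul]
      congr 1
      push_cast; ring
    rw [mul_pow, mul_pow, h]
  have hI2 : ∫⁻ z, ENNReal.ofReal (z ^ 2) ∂νn =
      (ENNReal.ofReal (β⁻¹ ^ 2) * 2) *
        ∫⁻ r in Set.Ioc (0 : ℝ) n, ENNReal.ofReal (Real.exp (-2 * r / a)) := by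
    rw [hmap, lintegral_map hg2 hF, lintegral_prod (fun z => ENNReal.ofReal (F z ^ 2)) ((hF.pow_const 2).ennreal_ofReal.aemeasurable)]
    have hinner : ∀ r : ℝ,
        ∫⁻ ω, ENNReal.ofReal (F (r, ω) ^ 2) ∂P =
          (ENNReal.ofReal (β⁻¹ ^ 2) * 2) * ENNReal.ofReal (Real.exp (-2 * r / a)) := by
      intro r
      have : ∀ ω, ENNReal.ofReal (F (r, ω) ^ 2) =
          ENNReal.ofReal (β⁻¹ ^ 2 * Real.exp (-2 * r / a)) * ENNReal.ofReal (V ω ^ 2) := by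
        intro ω
        rw [hFdef]
        simp only []
        rw [hsq, ENNReal.ofReal_mul (by positivity)]
      simp_rw [this]
      rw [lintegral_const_mul' _ _ ENNReal.ofReal_ne_top, hV2,
        ENNReal.ofReal_mul (by positivity)]
      ring
    simp_rw [hinner]
    rw [lintegral_const_mul' _ _ (by finiteness)]
  -- the exponential integral
  have hE : ∫⁻ r in Set.Ioc (0 : ℝ) n, ENNReal.ofReal (Real.exp (-2 * r / a)) =
      ENNReal.ofReal (a / 2 * (1 - Real.exp (-2 * n / a))) := by
    have hcont : Continuous fun r : ℝ => Real.exp (-2 * r / a) := by fun_prop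
    rw [← ofReal_integral_eq_lintegral_ofReal hcont.integrableOn_Ioc
      (ae_of_all _ fun r => (Real.exp_pos _).le)]
    congr 1
    rw [← intervalIntegral.integral_of_le hn.le]
    have hd : ∀ x ∈ Set.uIcc (0 : ℝ) n,
        HasDerivAt (fun r => -(a / 2) * Real.exp (-2 * r / a)) (Real.exp (-2 * x / a)) x := by
      intro x _
      have h1 : HasDerivAt (fun r : ℝ => -2 * r / a) (-2 / a) x := by
        simpa using ((hasDerivAt_id x).const_mul (-2 : ℝ)).div_const a
      have h2 := (Real.hasDerivAt_exp (-2 * x / a)).comp x h1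
      have h3 := h2.const_mul (-(a / 2))
      convert h3 using 1
      · rfl
      · rfl
      · rfl
      field_simp
    rw [intervalIntegral.integral_eq_sub_of_hasDerivAt hd (hcont.intervalIntegrable 0 n)]
    have : (-2 : ℝ) * 0 / a = 0 := by ring
    rw [this, Real.exp_zero]
    ring
  -- final computation
  have he1 : Real.exp (-2 * n / a) ≤ 1 := by
    rw [← Real.exp_zero]
    apply Real.exp_le_exp.mpr
    have : -2 * n / a < 0 := div_neg_of_neg_of_pos (by linarith) ha
    linarith
  rw [hI1, hI2, hE, ENNReal.toReal_ofReal (by positivity), ENNReal.toReal_mul,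
    ENNReal.toReal_mul, ENNReal.toReal_ofReal (by positivity),
    ENNReal.toReal_ofReal (by nlinarith)]
  simp only [ENNReal.toReal_ofNat]
  field_simp
  ring
end

section
/- Suppose ν is a symmetric infinite Lévy measure on ℝ with no atoms in a neighborhood of the origin, and define σ(ε)² = ∫_{|z|<ε} z² ν(dz). If σ(ε)/ε → ∞ as ε → 0, then for every c > 0, σ(cσ(ε) ∧ ε) ∼ σ(ε) as ε → 0. -/
open MeasureTheory Filter
open scoped Topology

/-- Sufficient condition for the Asmussen–Rosiński Gaussian approximation criterion: for a
symmetric infinite Lévy measure `ν` on `ℝ` with no atoms near the origin and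
`σ(ε)² = ∫_{|z|<ε} z² ν(dz)`, if `σ(ε)/ε → ∞` as `ε → 0⁺`, then for every `c > 0`,
`σ(cσ(ε) ∧ ε) ∼ σ(ε)` as `ε → 0⁺`. -/
theorem asmussen_rosinski_sufficient
    (ν : Measure ℝ)
    (hsym : Measure.map (fun x : ℝ => -x) ν = ν)
    (hinf : ν {x : ℝ | x ≠ 0} = ⊤)
    (hlevy : ∫⁻ z, ENNReal.ofReal (min 1 (z ^ 2)) ∂ν < ⊤)
    (hatom : ∃ δ > (0 : ℝ), ∀ x : ℝ, |x| < δ → ν {x} = 0)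
    (σf : ℝ → ℝ)
    (hσ : ∀ ε : ℝ, σf ε =
      Real.sqrt ((∫⁻ z in {z : ℝ | |z| < ε}, ENNReal.ofReal (z ^ 2) ∂ν).toReal))
    (hgrow : Tendsto (fun ε => σf ε / ε) (𝓝[>] (0 : ℝ)) atTop) :
    ∀ c : ℝ, 0 < c →
      Tendsto (fun ε => σf (min (c * σf ε) ε) / σf ε) (𝓝[>] (0 : ℝ)) (𝓝 1) := by
  intro c hc
  have h1 := hgrow.eventually_ge_atTop (1 / c)
  have h2 := hgrow.eventually_gt_atTop 0
  have heq : ∀ᶠ ε in 𝓝[>] (0 : ℝ),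
      σf (min (c * σf ε) ε) / σf ε = 1 := by
    filter_upwards [h1, h2, self_mem_nhdsWithin] with ε hge hpos hε
    have hεpos : (0 : ℝ) < ε := hε
    have hσpos : 0 < σf ε := by
      rcases div_pos_iff.mp hpos with ⟨h, _⟩ | ⟨_, h⟩
      · exact h
      · linarith
    have hmin : min (c * σf ε) ε = ε := by
      apply min_eq_right
      rw [div_le_div_iff₀ hc hεpos] at hge
      nlinarith
    rw [hmin, div_self hσpos.ne']
  exact tendsto_const_nhds.congr' (by filter_upwards [heq] with x hx; exact hx.symm)
end

section
/- Let ν be the Lévy measure of the gamma law, ν(dz) = (a/z)e^{−βz} dz on (0,∞), and let H_I(r) = inf{u > 0 : a E₁(βu) < r} where E₁ is the exponential integral. Then there exists s > 0 such that lim sup_{t→∞} H_I(t+s)/H_I(t) < 1; in particular H_I(t+s)/H_I(t) does not converge to 1, reflecting the failure of Gaussian approximation of small jumps for the gamma process. -/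
open MeasureTheory Filter
open scoped Topology

open Real Set

private lemma expInt_integrableOn {x : ℝ} (hx : 0 < x) :
    IntegrableOn (fun u : ℝ => Real.exp (-u) / u) (Set.Ioi x) := by
  have hmeas : AEStronglyMeasurable (fun u : ℝ => Real.exp (-u) / u)
      (volume.restrict (Set.Ioi x)) :=
    ((Real.measurable_exp.comp measurable_neg).div measurable_id).aestronglyMeasurable
  have hg : IntegrableOn (fun u : ℝ => Real.exp (-u) / x) (Set.Ioi x) := by
    have := (exp_neg_integrableOn_Ioi x (b := 1) one_pos)
    simpa [IntegrableOn] using this.div_const x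
  refine hg.mono' hmeas ?_
  filter_upwards [ae_restrict_mem measurableSet_Ioi] with u hu
  have hu' : x < u := hu
  have h0 : 0 < u := hx.trans hu'
  rw [Real.norm_eq_abs, abs_of_nonneg (by positivity)]
  exact div_le_div_of_nonneg_left (Real.exp_pos _).le hx hu'.le

private lemma expInt_split {x : ℝ} (hx : 0 < x) (hx1 : x ≤ 1) :
    expInt x = (∫ u in Set.Ioc x 1, Real.exp (-u) / u) + ∫ u in Set.Ioi 1, Real.exp (-u) / u := by
  rw [expInt, ← Set.Ioc_union_Ioi_eq_Ioi hx1]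
  rw [setIntegral_union (Set.Ioc_disjoint_Ioi le_rfl) measurableSet_Ioi
    ((expInt_integrableOn hx).mono_set (by rw [← Set.Ioc_union_Ioi_eq_Ioi hx1]; exact Set.subset_union_left))
    (expInt_integrableOn one_pos)]

private lemma expInt_le {x : ℝ} (hx : 0 < x) (hx1 : x ≤ 1) : expInt x ≤ 1 - Real.log x := by
  rw [expInt_split hx hx1]
  have h1 : (∫ u in Set.Ioc x 1, Real.exp (-u) / u) ≤ ∫ u in Set.Ioc x 1, u⁻¹ := by
    refine setIntegral_mono_on
      ((expInt_integrableOn hx).mono_set (by rw [← Set.Ioc_union_Ioi_eq_Ioi hx1]; exact Set.subset_union_left))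
      ?_ measurableSet_Ioc ?_
    · have : IntegrableOn (fun u : ℝ => u⁻¹) (Set.Icc x 1) :=
        (continuousOn_inv₀.mono (fun u hu => ne_of_gt (lt_of_lt_of_le hx hu.1))).integrableOn_compact isCompact_Icc
      exact this.mono_set Set.Ioc_subset_Icc_self
    · intro u hu
      have h0 : 0 < u := hx.trans hu.1
      rw [div_le_iff₀ h0, inv_mul_cancel₀ h0.ne']
      calc Real.exp (-u) ≤ 1 := Real.exp_le_one_iff.mpr (by linarith)
        _ = _ := rfl
  have h2 : (∫ u in Set.Ioc x 1, u⁻¹) = - Real.log x := by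
    rw [← intervalIntegral.integral_of_le hx1, integral_inv_of_pos hx one_pos]
    rw [Real.log_div one_ne_zero hx.ne', Real.log_one]; ring
  have h3 : (∫ u in Set.Ioi 1, Real.exp (-u) / u) ≤ ∫ u in Set.Ioi 1, Real.exp (-u) := by
    refine setIntegral_mono_on (expInt_integrableOn one_pos)
      (by simpa using exp_neg_integrableOn_Ioi (1:ℝ) (b := 1) one_pos) measurableSet_Ioi ?_
    intro u hu
    have h0 : (0:ℝ) < u := lt_trans one_pos hu
    have hu' : (1:ℝ) < u := hu
    rw [div_le_iff₀ h0]
    nlinarith [mul_nonneg (Real.exp_pos (-u)).le (sub_nonneg.mpr hu'.le)]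
  have h4 : (∫ u in Set.Ioi 1, Real.exp (-u)) = Real.exp (-1) := integral_exp_neg_Ioi 1
  have h5 : Real.exp (-1 : ℝ) ≤ 1 := Real.exp_le_one_iff.mpr (by norm_num)
  linarith

private lemma le_expInt {x : ℝ} (hx : 0 < x) (hx1 : x ≤ 1) : - Real.log x - 1 ≤ expInt x := by
  rw [expInt_split hx hx1]
  have hIoc : IntegrableOn (fun u : ℝ => Real.exp (-u) / u) (Set.Ioc x 1) :=
    (expInt_integrableOn hx).mono_set (by rw [← Set.Ioc_union_Ioi_eq_Ioi hx1]; exact Set.subset_union_left)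
  have h1 : (∫ u in Set.Ioc x 1, (u⁻¹ - 1)) ≤ ∫ u in Set.Ioc x 1, Real.exp (-u) / u := by
    refine setIntegral_mono_on ?_ hIoc measurableSet_Ioc ?_
    · have : IntegrableOn (fun u : ℝ => u⁻¹ - 1) (Set.Icc x 1) :=
        ((continuousOn_inv₀.mono (fun u hu => ne_of_gt (lt_of_lt_of_le hx hu.1))).sub continuousOn_const).integrableOn_compact isCompact_Icc
      exact this.mono_set Set.Ioc_subset_Icc_self
    · intro u hu
      have h0 : 0 < u := hx.trans hu.1
      rw [le_div_iff₀ h0]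
      have h1e := Real.add_one_le_exp (-u)
      have h2e : u⁻¹ * u = 1 := inv_mul_cancel₀ h0.ne'
      nlinarith
  have h2 : (∫ u in Set.Ioc x 1, (u⁻¹ - 1 : ℝ)) = - Real.log x - (1 - x) := by
    rw [← intervalIntegral.integral_of_le hx1]
    rw [intervalIntegral.integral_sub (by
        apply intervalIntegral.intervalIntegrable_inv
        · intro u hu
          rw [Set.uIcc_of_le hx1] at hu
          exact ne_of_gt (lt_of_lt_of_le hx hu.1)
        · exact continuousOn_id) intervalIntegrable_const]
    rw [integral_inv_of_pos hx one_pos, intervalIntegral.integral_const]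
    rw [Real.log_div one_ne_zero hx.ne', Real.log_one]
    simp
  have h3 : 0 ≤ ∫ u in Set.Ioi 1, Real.exp (-u) / u := by
    refine setIntegral_nonneg measurableSet_Ioi ?_
    intro u hu; have : (0:ℝ) < u := lt_trans one_pos hu; positivity
  nlinarith

/-- Failure of the Gaussian approximation of small jumps for the gamma process: with
`H_I(r) = inf{u > 0 : a E₁(βu) < r}` the inverse tail of the gamma Lévy measure
`(a/z)e^{-βz}dz`, there is an `s > 0` with `limsup_{t→∞} H_I(t+s)/H_I(t) < 1`; in
particular `H_I(t+s)/H_I(t)` does not converge to `1`. -/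
theorem gamma_inverse_tail_not_slowly_varying
    (a β : ℝ) (ha : 0 < a) (hβ : 0 < β)
    (HI : ℝ → ℝ)
    (hHI : ∀ r : ℝ, HI r = sInf {u : ℝ | 0 < u ∧ a * expInt (β * u) < r}) :
    ∃ s : ℝ, 0 < s ∧
      limsup (fun t => HI (t + s) / HI t) atTop < 1 ∧
      ¬ Tendsto (fun t => HI (t + s) / HI t) atTop (𝓝 1) := by
  -- Lower bound for every element of the defining set, for r ≥ 0.
  have hlow : ∀ r : ℝ, 0 ≤ r → ∀ u ∈ {u : ℝ | 0 < u ∧ a * expInt (β * u) < r},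
      β⁻¹ * Real.exp (-(r / a) - 1) ≤ u := by
    intro r hr u hu
    obtain ⟨hu0, hue⟩ := hu
    by_contra h
    push_neg at h
    have hβu : β * u < Real.exp (-(r / a) - 1) := by
      have h' := mul_lt_mul_of_pos_left h hβ
      rwa [← mul_assoc, mul_inv_cancel₀ hβ.ne', one_mul] at h'
    have hβu0 : 0 < β * u := mul_pos hβ hu0
    have hβu1 : β * u ≤ 1 := by
      refine le_of_lt (lt_of_lt_of_le hβu ?_)
      rw [Real.exp_le_one_iff]
      have : 0 ≤ r / a := div_nonneg hr ha.le
      linarith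
    have hE := le_expInt hβu0 hβu1
    have hlog : Real.log (β * u) < -(r / a) - 1 := by
      have := Real.log_lt_log hβu0 hβu
      rwa [Real.log_exp] at this
    have hd : r / a < expInt (β * u) := by linarith
    have : r < a * expInt (β * u) := by
      calc r = a * (r / a) := by field_simp
        _ < a * expInt (β * u) := mul_lt_mul_of_pos_left hd ha
    linarith
  -- Membership of the explicit upper-bound point, for r ≥ 2a.
  have hmem : ∀ r : ℝ, 2 * a ≤ r →
      (β⁻¹ * Real.exp (2 - r / a)) ∈ {u : ℝ | 0 < u ∧ a * expInt (β * u) < r} := by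
    intro r hr
    have hu0 : 0 < β⁻¹ * Real.exp (2 - r / a) := by positivity
    have hβu : β * (β⁻¹ * Real.exp (2 - r / a)) = Real.exp (2 - r / a) := by
      field_simp
    have hra : 2 ≤ r / a := (le_div_iff₀ ha).mpr (by linarith)
    have hβu1 : Real.exp (2 - r / a) ≤ 1 := Real.exp_le_one_iff.mpr (by linarith)
    refine ⟨hu0, ?_⟩
    rw [hβu]
    have hE := expInt_le (Real.exp_pos _) hβu1
    rw [Real.log_exp] at hE
    have : a * expInt (Real.exp (2 - r / a)) ≤ a * (1 - (2 - r / a)) :=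
      mul_le_mul_of_nonneg_left hE ha.le
    have h2 : a * (1 - (2 - r / a)) = r - a := by field_simp; ring
    linarith
  -- The two sInf bounds.
  have hHIub : ∀ r : ℝ, 2 * a ≤ r → HI r ≤ β⁻¹ * Real.exp (2 - r / a) := by
    intro r hr
    rw [hHI r]
    exact csInf_le ⟨β⁻¹ * Real.exp (-(r / a) - 1), hlow r (by linarith)⟩ (hmem r hr)
  have hHIlb : ∀ r : ℝ, 2 * a ≤ r → β⁻¹ * Real.exp (-(r / a) - 1) ≤ HI r := by
    intro r hr
    rw [hHI r]
    exact le_csInf ⟨_, hmem r hr⟩ (hlow r (by linarith))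
  have hls : limsup (fun t => HI (t + 4 * a) / HI t) atTop < 1 := by
    have hbound : ∀ᶠ t in atTop, HI (t + 4 * a) / HI t ≤ Real.exp (-1) := by
      filter_upwards [Filter.eventually_ge_atTop (2 * a)] with t ht
      have h1 : HI (t + 4 * a) ≤ β⁻¹ * Real.exp (2 - (t + 4 * a) / a) :=
        hHIub _ (by linarith)
      have h2 : β⁻¹ * Real.exp (-(t / a) - 1) ≤ HI t := hHIlb _ ht
      have h3 : (0:ℝ) < β⁻¹ * Real.exp (-(t / a) - 1) := by positivity
      calc HI (t + 4 * a) / HI t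
          ≤ (β⁻¹ * Real.exp (2 - (t + 4 * a) / a)) / (β⁻¹ * Real.exp (-(t / a) - 1)) :=
            div_le_div₀ (by positivity) h1 h3 h2
        _ = Real.exp (-1) := by
            rw [mul_div_mul_left _ _ (by positivity : (β:ℝ)⁻¹ ≠ 0),
              ← Real.exp_sub]
            congr 1
            field_simp
            ring
    have hnonneg : ∀ᶠ t in atTop, (0:ℝ) ≤ HI (t + 4 * a) / HI t := by
      filter_upwards [Filter.eventually_ge_atTop (2 * a)] with t ht
      have h2 : β⁻¹ * Real.exp (-(t / a) - 1) ≤ HI t := hHIlb _ ht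
      have h3 : (0:ℝ) < β⁻¹ * Real.exp (-(t / a) - 1) := by positivity
      have h4 : β⁻¹ * Real.exp (-((t + 4 * a) / a) - 1) ≤ HI (t + 4 * a) :=
        hHIlb _ (by linarith)
      have h5 : (0:ℝ) < HI (t + 4 * a) := lt_of_lt_of_le (by positivity) h4
      exact div_nonneg h5.le (le_trans h3.le h2)
    have hcb : IsCoboundedUnder (· ≤ ·) atTop (fun t => HI (t + 4 * a) / HI t) :=
      (isBoundedUnder_of_eventually_ge hnonneg).isCoboundedUnder_flip
    have := limsup_le_of_le hcb hbound
    refine lt_of_le_of_lt this ?_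
    exact Real.exp_lt_one_iff.mpr (by norm_num)
  exact ⟨4 * a, by positivity, hls, fun hT => (ne_of_lt hls) hT.limsup_eq⟩
end
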